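/- Let 1 ≤ k ≤ n be integers with n ≥ 2k, and let 0 ≤ i ≤ j ≤ k. Then the integer Σ_{v=0}^{i} (−1)^{i+v} C(i,v) · (k−v) · C(n−k−j+v, 1−j+v) equals (k−i)(n−k−i) − i if i = j; equals k−i if i = j−1; and equals 0 if i < j−1. (Equivalently, f_i(j; n, k, k, k−1) takes these values.) -/

import Mathlib

/-! Since `C x y = 0` for `y < 0`, the factor `C(n−k−j+v, 1−j+v)` kills every summand with
`v + 1 < j`. As `v ≤ i ≤ j`, at most the two top summands `v = j − 1` and `v = j` survive,
and there the binomial is `C(n−k−1, 0) = 1` resp. `C(n−k, 1) = n − k`. -/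

/-- Integer binomial coefficient with the convention `C x y = 0` unless `0 ≤ y ≤ x`. -/
def C (x y : ℤ) : ℤ :=
  if 0 ≤ y ∧ y ≤ x then (x.toNat).choose y.toNat else 0

lemma C_of_neg {x y : ℤ} (hy : y < 0) : C x y = 0 :=
  if_neg fun h => absurd h.1 (not_le.mpr hy)

lemma C_zero_right {x : ℤ} (hx : 0 ≤ x) : C x 0 = 1 := by
  simp [C, hx]

lemma C_one_right {x : ℤ} (hx : 0 ≤ x) : C x 1 = x := by
  unfold C
  split_ifs with h
  · simp [Int.toNat_of_nonneg hx]
  · omega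

/-- The `v`-th summand of `f_i(j; n, k, k, k−1)`. -/
def summand (n k i j v : ℕ) : ℤ :=
  (-1 : ℤ) ^ (i + v) * (i.choose v) * ((k : ℤ) - v) * C ((n : ℤ) - k - j + v) (1 - (j : ℤ) + v)

section summand

variable {n k i j v : ℕ}

lemma summand_eq_zero_of_add_one_lt (h : v + 1 < j) : summand n k i j v = 0 := by
  rw [summand, C_of_neg (by omega), mul_zero]

lemma sum_range_summand_eq_zero {m : ℕ} (hm : m < j) :
    ∑ v ∈ Finset.range m, summand n k i j v = 0 :=
  Finset.sum_eq_zero fun _ hv => summand_eq_zero_of_add_one_lt (by simp at hv; omega)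

lemma summand_pred (hkn : k < n) :
    summand n k i (v + 1) v = (-1 : ℤ) ^ (i + v) * (i.choose v) * ((k : ℤ) - v) := by
  have hx : (n : ℤ) - k - (v + 1 : ℕ) + v = n - k - 1 := by push_cast; ring
  have hy : 1 - ((v + 1 : ℕ) : ℤ) + v = 0 := by push_cast; ring
  rw [summand, hx, hy, C_zero_right (by omega), mul_one]

lemma summand_self (hkn : k ≤ n) :
    summand n k i v v = (-1 : ℤ) ^ (i + v) * (i.choose v) * ((k : ℤ) - v) * ((n : ℤ) - k) := by
  have hx : (n : ℤ) - k - v + v = n - k := by ring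
  have hy : 1 - (v : ℤ) + v = 1 := by ring
  rw [summand, hx, hy, C_one_right (by omega)]

end summand

theorem statement13_general (n k i j : ℕ) (hk : 1 ≤ k) (h2k : 2 * k ≤ n)
    (hij : i ≤ j) :
    (∑ v ∈ Finset.range (i + 1),
        (-1 : ℤ) ^ (i + v) * (i.choose v) * ((k : ℤ) - v) *
          C ((n : ℤ) - k - j + v) (1 - (j : ℤ) + v))
      = if i = j then ((k : ℤ) - i) * ((n : ℤ) - k - i) - i
        else if j = i + 1 then (k : ℤ) - i
        else 0 := by
  change ∑ v ∈ Finset.range (i + 1), summand n k i j v = _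
  have hkn : k < n := by omega
  obtain rfl | rfl | hj := (by omega : i = j ∨ j = i + 1 ∨ i + 1 < j)
  · obtain _ | m := i
    · simp [summand_self hkn.le]
    · rw [Finset.sum_range_succ, Finset.sum_range_succ, sum_range_summand_eq_zero (by omega),
        summand_pred hkn, summand_self hkn.le, Odd.neg_one_pow ⟨m, by ring⟩,
        Even.neg_one_pow ⟨m + 1, rfl⟩, Nat.choose_succ_self_right, Nat.choose_self, if_pos rfl]
      push_cast
      ring
  · rw [Finset.sum_range_succ, sum_range_summand_eq_zero (by omega), summand_pred hkn,
      Even.neg_one_pow ⟨i, rfl⟩, Nat.choose_self, if_neg (by omega), if_pos rfl]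
    simp
  · rw [sum_range_summand_eq_zero hj, if_neg (by omega), if_neg (by omega)]

/-- Evaluation of `f_i(j; n, k, k, k−1)`:
`Σ_{v=0}^{i} (−1)^{i+v} C(i,v)·(k−v)·C(n−k−j+v, 1−j+v)` equals
`(k−i)(n−k−i) − i` when `i = j`, equals `k−i` when `j = i+1`, and `0` when `i < j−1`. -/
theorem statement13 (n k i j : ℕ) (hk : 1 ≤ k) (hkn : k ≤ n) (h2k : 2 * k ≤ n)
    (hij : i ≤ j) (hjk : j ≤ k) :
    (∑ v ∈ Finset.range (i + 1),
        (-1 : ℤ) ^ (i + v) * (i.choose v) * ((k : ℤ) - v) *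
          C ((n : ℤ) - k - j + v) (1 - (j : ℤ) + v))
      = if i = j then ((k : ℤ) - i) * ((n : ℤ) - k - i) - i
        else if j = i + 1 then (k : ℤ) - i
        else 0 :=
  statement13_general n k i j hk h2k hij
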